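/- Let T, d be positive integers with T > d, and let P be a nonzero real polynomial in the variables W_1, …, W_T of total degree at most d. For each j ∈ {1, …, T}, write P = W_j²·P_j + R_j, where R_j is the sub-polynomial of P consisting of all monomials in which the exponent of W_j is at most 1 (so R_j is not divisible by W_j²). Then there exists j ∈ {1, …, T} such that ‖R_j‖ > 4^{-2^d}·‖P‖. -/

import Mathlib

open MvPolynomial

/-- Squared ℓ2 norm of the coefficient vector of a multivariate polynomial
in the standard monomial basis. -/
noncomputable def coeffNormSq {σ : Type*} (P : MvPolynomial σ ℝ) : ℝ :=
  ∑ m ∈ P.support, (P.coeff m) ^ 2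

/-- ℓ2 norm of the coefficient vector of a multivariate polynomial. -/
noncomputable def coeffNorm {σ : Type*} (P : MvPolynomial σ ℝ) : ℝ :=
  Real.sqrt (coeffNormSq P)

/-- The sub-polynomial of `P` consisting of all monomials in which the exponent
of the variable `j` is at most `1` (i.e. the part of `P` not divisible by `W_j²`). -/
noncomputable def lowPart {T : ℕ} (P : MvPolynomial (Fin T) ℝ) (j : Fin T) :
    MvPolynomial (Fin T) ℝ :=
  ∑ m ∈ P.support.filter (fun m => m j ≤ 1), monomial m (P.coeff m)

/-!
A monomial of degree at most `d` has exponent at least `2` in at most `d` of the `T` variables,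
so every monomial of `P` survives in at least `T - d` of the `R_j`, and
`∑ⱼ ‖R_j‖² ≥ (T - d) ‖P‖²`. Some `‖R_j‖²` is therefore at least `(T - d) / T · ‖P‖²`, which is
at least `‖P‖² / (d + 1)` since `T > d`, and this beats `16^(-2^d) ‖P‖²` since `d + 1 < 4^(2^d)`.
-/

open Finset

lemma coeffNormSq_eq_sum_of_support_subset {σ : Type*} {P : MvPolynomial σ ℝ}
    {s : Finset (σ →₀ ℕ)} (h : P.support ⊆ s) : coeffNormSq P = ∑ m ∈ s, P.coeff m ^ 2 :=
  sum_subset h fun m _ hm => by simp [notMem_support_iff.mp hm]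

lemma coeffNormSq_pos {σ : Type*} {P : MvPolynomial σ ℝ} (hP : P ≠ 0) : 0 < coeffNormSq P :=
  sum_pos (fun _ hm => sq_pos_of_ne_zero (mem_support_iff.mp hm)) (support_nonempty.mpr hP)

lemma card_le_card_filter_le_one_add_degree {σ : Type*} [Fintype σ] (m : σ →₀ ℕ) :
    Fintype.card σ ≤ #{i | m i ≤ 1} + m.degree := by
  classical
  have h_high : #{i | ¬m i ≤ 1} ≤ #m.support :=
    card_le_card fun i hi =>
      Finsupp.mem_support_iff.mpr (by simp only [mem_filter] at hi; omega)
  have h_support : #m.support ≤ m.degree := by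
    rw [card_eq_sum_ones, Finsupp.degree_apply]
    exact sum_le_sum fun i hi => Nat.one_le_iff_ne_zero.mpr (Finsupp.mem_support_iff.mp hi)
  have h_split := card_filter_add_card_filter_not (s := univ) (fun i => m i ≤ 1)
  rw [card_univ] at h_split
  omega

section lowPart

variable {T : ℕ} (P : MvPolynomial (Fin T) ℝ)

lemma coeff_lowPart (j : Fin T) (m : Fin T →₀ ℕ) :
    (lowPart P j).coeff m = if m j ≤ 1 then P.coeff m else 0 := by
  classical
  simp only [lowPart, coeff_sum, coeff_monomial, sum_ite_eq', mem_filter, mem_support_iff]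
  by_cases h : P.coeff m = 0 <;> simp [h]

lemma support_lowPart_subset (j : Fin T) : (lowPart P j).support ⊆ P.support := by
  intro m hm
  rw [mem_support_iff, coeff_lowPart] at hm
  rw [mem_support_iff]
  split_ifs at hm <;> simp_all

lemma coeffNormSq_lowPart (j : Fin T) :
    coeffNormSq (lowPart P j) = ∑ m ∈ P.support with m j ≤ 1, P.coeff m ^ 2 := by
  rw [coeffNormSq_eq_sum_of_support_subset (support_lowPart_subset P j), sum_filter]
  simp_rw [coeff_lowPart, ite_pow, zero_pow two_ne_zero]

lemma sum_coeffNormSq_lowPart :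
    ∑ j, coeffNormSq (lowPart P j) = ∑ m ∈ P.support, (#{j | m j ≤ 1} : ℝ) * P.coeff m ^ 2 := by
  simp_rw [coeffNormSq_lowPart, sum_filter]
  rw [sum_comm]
  simp_rw [← sum_filter, sum_const, nsmul_eq_mul]

end lowPart

lemma sub_mul_coeffNormSq_le_sum_coeffNormSq_lowPart {T d : ℕ} (hTd : d ≤ T)
    {P : MvPolynomial (Fin T) ℝ} (hPd : P.totalDegree ≤ d) :
    ((T : ℝ) - d) * coeffNormSq P ≤ ∑ j, coeffNormSq (lowPart P j) := by
  rw [sum_coeffNormSq_lowPart, coeffNormSq, mul_sum]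
  refine sum_le_sum fun m hm => mul_le_mul_of_nonneg_right ?_ (sq_nonneg _)
  have h_deg : m.degree ≤ d := (le_totalDegree hm).trans hPd
  have h_card := card_le_card_filter_le_one_add_degree m
  rw [Fintype.card_fin] at h_card
  rw [← Nat.cast_sub hTd]
  exact_mod_cast (by omega : T - d ≤ #{j | m j ≤ 1})

lemma exists_mul_coeffNormSq_lt_coeffNormSq_lowPart {T d : ℕ} (hTd : d ≤ T) {c : ℝ}
    (hc : T * c < T - d) {P : MvPolynomial (Fin T) ℝ} (hP : P ≠ 0) (hPd : P.totalDegree ≤ d) :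
    ∃ j, c * coeffNormSq P < coeffNormSq (lowPart P j) := by
  have h_lt : ∑ _j : Fin T, c * coeffNormSq P < ∑ j, coeffNormSq (lowPart P j) := by
    calc ∑ _j : Fin T, c * coeffNormSq P = T * c * coeffNormSq P := by simp [mul_assoc]
      _ < (T - d) * coeffNormSq P := mul_lt_mul_of_pos_right hc (coeffNormSq_pos hP)
      _ ≤ _ := sub_mul_coeffNormSq_le_sum_coeffNormSq_lowPart hTd hPd
  obtain ⟨j, -, hj⟩ := exists_lt_of_sum_lt h_lt
  exact ⟨j, hj⟩

lemma natCast_add_one_lt_four_pow_two_pow (d : ℕ) : (d + 1 : ℝ) < 4 ^ 2 ^ d := by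
  exact_mod_cast lt_of_le_of_lt Nat.lt_two_pow_self (Nat.lt_pow_self (by norm_num))

lemma natCast_mul_sq_lt_sub {T d : ℕ} (hTd : d < T) {ε : ℝ} (hε : 0 ≤ ε)
    (hε_small : (d + 1) * ε < 1) : T * ε ^ 2 < T - d := by
  have hε_lt_one : ε < 1 := (le_mul_of_one_le_left hε (by simp)).trans_lt hε_small
  have hTd' : (d : ℝ) + 1 ≤ T := by exact_mod_cast hTd
  calc (T : ℝ) * ε ^ 2 = (T - (d + 1)) * ε ^ 2 + ((d + 1) * ε) * ε := by ring
    _ < ((T : ℝ) - (d + 1)) * 1 + 1 * 1 :=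
      add_lt_add_of_le_of_lt
        (mul_le_mul_of_nonneg_left (pow_le_one₀ hε hε_lt_one.le) (by linarith))
        (mul_lt_mul'' hε_small hε_lt_one (by positivity) hε)
    _ = T - d := by ring

theorem stmt2_general (T d : ℕ) (hTd : d < T)
    (P : MvPolynomial (Fin T) ℝ) (hP : P ≠ 0) (hPd : P.totalDegree ≤ d) :
    ∃ j : Fin T, ((4 : ℝ) ^ (2 ^ d))⁻¹ * coeffNorm P < coeffNorm (lowPart P j) := by
  set ε : ℝ := ((4 : ℝ) ^ (2 ^ d))⁻¹
  have hε_pos : 0 < ε := by positivity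
  have hε_small : (d + 1) * ε < 1 := by
    rw [← div_eq_mul_inv, div_lt_one (by positivity)]
    exact natCast_add_one_lt_four_pow_two_pow d
  obtain ⟨j, hj⟩ := exists_mul_coeffNormSq_lt_coeffNormSq_lowPart hTd.le
    (natCast_mul_sq_lt_sub hTd hε_pos.le hε_small) hP hPd
  refine ⟨j, ?_⟩
  rw [coeffNorm, coeffNorm, ← Real.sqrt_sq hε_pos.le, ← Real.sqrt_mul (sq_nonneg ε)]
  exact Real.sqrt_lt_sqrt (mul_nonneg (sq_nonneg ε) (coeffNormSq_pos hP).le) hj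

theorem stmt2 (T d : ℕ) (hT : 0 < T) (hd : 0 < d) (hTd : d < T)
    (P : MvPolynomial (Fin T) ℝ) (hP : P ≠ 0) (hPd : P.totalDegree ≤ d) :
    ∃ j : Fin T, ((4 : ℝ) ^ (2 ^ d))⁻¹ * coeffNorm P < coeffNorm (lowPart P j) :=
  stmt2_general T d hTd P hP hPd
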